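/- There exists an absolute constant C₀ > 0 with the following property. Let s₁, s₂ ≥ 3 and a₁ < b₁, a₂ < b₂ be positive integers with 16 s₁^{b₁} < s₂^{a₂}, and let N₂ be the positive integer defined by N₂ + 1 = ⌊s₂^{a₂} / s₁^{b₁}⌋. Define ℌ(ξ) := (1 − e(ξ N₂ s₂^{−a₂})) / (1 − e(ξ s₁^{−b₁})). Then for every ξ ∈ ℤ such that s₁^{b₁} does not divide ξ and ξ² ≤ s₁^{b₁} s₂^{a₂}, one has |ℌ(ξ) − 1| ≤ C₀ |ξ| s₁^{b₁} s₂^{−a₂}. -/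

import Mathlib

open Finset

/-- `e(y) = exp(-2πi y)`. -/
noncomputable def eneg (y : ℝ) : ℂ := Complex.exp (-(2 * Real.pi * Complex.I * (y : ℂ)))

/-- `1̂(θ) = ∫₀¹ e(xθ) dx`. -/
noncomputable def oneHat (θ : ℝ) : ℂ := ∫ x in (0:ℝ)..1, eneg (x * θ)

/-- The `j`-th base-`s` digit of the natural number `n`. -/
def digitOf (s n j : ℕ) : ℕ := n / s ^ j % s

/-- `𝔄(ξ; N, s, a) = N⁻¹ Σ_{k<N} e(ξ k s^{-a})`. -/
noncomputable def Afun (N s a : ℕ) (ξ : ℤ) : ℂ :=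
  (N : ℂ)⁻¹ * ∑ k ∈ Finset.range N, eneg ((ξ : ℝ) * k / (s : ℝ) ^ a)

/-- `ℭ(ξ) = s^{a-b} Σ_{ℓ < s^{b-a}} e(ξ ℓ s^{-b})`. -/
noncomputable def Cfun (s a b : ℕ) (ξ : ℤ) : ℂ :=
  (((s : ℝ) ^ a / (s : ℝ) ^ b : ℝ) : ℂ) *
    ∑ ℓ ∈ Finset.range (s ^ (b - a)), eneg ((ξ : ℝ) * ℓ / (s : ℝ) ^ b)

/-- `𝕃*`: the set of `ℓ < s^{b-a}` all of whose `b-a` base-`s` digits lie in `D`. -/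
def Lstar (s a b : ℕ) (D : Finset ℕ) : Finset ℕ :=
  (Finset.range (s ^ (b - a))).filter fun ℓ => ∀ j < b - a, digitOf s ℓ j ∈ D

/-- `𝔅*(ξ) = r^{a-b} Σ_{ℓ ∈ 𝕃*} e(ξ ℓ s^{-b})`, where `r = #D`. -/
noncomputable def Bstar (s a b : ℕ) (D : Finset ℕ) (ξ : ℤ) : ℂ :=
  (((D.card : ℝ) ^ a / (D.card : ℝ) ^ b : ℝ) : ℂ) *
    ∑ ℓ ∈ Lstar s a b D, eneg ((ξ : ℝ) * ℓ / (s : ℝ) ^ b)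

/-- `g(ξ, k; s, 𝒜) = (#𝒜)⁻¹ Σ_{d ∈ 𝒜} e(ξ d s^{-k})`. -/
noncomputable def gfun (s : ℕ) (A : Finset ℕ) (ξ : ℤ) (k : ℕ) : ℂ :=
  (A.card : ℂ)⁻¹ * ∑ d ∈ A, eneg ((ξ : ℝ) * d / (s : ℝ) ^ k)

/-!
With `P = s₁^b₁`, `Q = s₂^a₂` and `δ = ξN₂/Q − ξ/P` one has
`ℌ(ξ) − 1 = e(ξ/P) (1 − e(δ)) / (1 − e(ξ/P))`. The floor condition gives `|N₂P − Q| ≤ 2P`,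
hence `|δ| ≤ 2|ξ|/Q` and `|1 − e(δ)| ≤ 4π|ξ|/Q`. Since `P ∤ ξ`, the point `ξ/P` lies at
distance at least `1/P` from `ℤ`, so `|1 − e(ξ/P)| = 2|sin(πξ/P)| ≥ 4/P`. Thus `C₀ = π` works.
-/

open Real

lemma eneg_sub_mul_eneg (x y : ℝ) : eneg (x - y) * eneg y = eneg x := by
  simp only [eneg, ← Complex.exp_add]
  push_cast
  ring_nf

lemma eneg_eq_exp_I_mul (y : ℝ) : eneg y = Complex.exp (Complex.I * ((-(2 * π * y) : ℝ) : ℂ)) := by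
  rw [eneg]; push_cast; ring_nf

lemma norm_eneg (y : ℝ) : ‖eneg y‖ = 1 := by
  rw [eneg_eq_exp_I_mul, mul_comm]
  exact Complex.norm_exp_ofReal_mul_I _

lemma norm_one_sub_eneg (y : ℝ) : ‖1 - eneg y‖ = 2 * |sin (π * y)| := by
  rw [norm_sub_rev, eneg_eq_exp_I_mul, Complex.norm_exp_I_mul_ofReal_sub_one,
    show -(2 * π * y) / 2 = -(π * y) by ring, sin_neg, mul_neg, norm_neg, Real.norm_eq_abs,
    abs_mul, abs_two]

lemma norm_one_sub_eneg_le (y : ℝ) : ‖1 - eneg y‖ ≤ 2 * π * |y| := by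
  rw [norm_sub_rev, eneg_eq_exp_I_mul]
  refine norm_exp_I_mul_ofReal_sub_one_le.trans_eq ?_
  rw [Real.norm_eq_abs, abs_neg, abs_mul, abs_of_pos (by positivity)]

lemma two_mul_abs_le_abs_sin_pi_mul {t : ℝ} (ht : |t| ≤ 1 / 2) : 2 * |t| ≤ |sin (π * t)| := by
  have h := mul_abs_le_abs_sin (x := π * t)
    (by rw [abs_mul, abs_of_pos pi_pos]; nlinarith [pi_pos])
  rwa [abs_mul, abs_of_pos pi_pos, ← mul_assoc, div_mul_cancel₀ _ pi_pos.ne'] at h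

/-- Writing `ξ / q = m + t` with `m` the nearest integer, `q t` is a nonzero integer, so
`1 / q ≤ |t| ≤ 1 / 2`. -/
lemma two_div_le_abs_sin_pi_mul_div {q : ℕ} {ξ : ℤ} (hξ : ¬ (q : ℤ) ∣ ξ) :
    2 / (q : ℝ) ≤ |sin (π * (ξ / q))| := by
  rcases Nat.eq_zero_or_pos q with rfl | hq
  · simp
  replace hq : (0 : ℝ) < q := by exact_mod_cast hq
  set m := round ((ξ : ℝ) / q)
  set t := (ξ : ℝ) / q - m
  have hqt : q * t = ((ξ - q * m : ℤ) : ℝ) := by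
    simp only [t]; push_cast; field_simp
  have hqt_ne : ξ - q * m ≠ 0 := fun h => hξ ⟨m, by omega⟩
  have ht : 1 / (q : ℝ) ≤ |t| := by
    rw [div_le_iff₀ hq, show |t| * q = |q * t| by rw [abs_mul, abs_of_pos hq, mul_comm], hqt]
    exact_mod_cast Int.one_le_abs hqt_ne
  have hsin : |sin (π * (ξ / q))| = |sin (π * t)| := by
    rw [show π * (ξ / q) = π * t + m * π by simp only [t]; ring, sin_add_int_mul_pi,
      abs_mul, abs_neg_one_zpow, one_mul]
  rw [hsin]
  calc 2 / (q : ℝ) = 2 * (1 / q) := by ring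
    _ ≤ 2 * |t| := by gcongr
    _ ≤ |sin (π * t)| := two_mul_abs_le_abs_sin_pi_mul (abs_sub_round _)

lemma four_div_le_norm_one_sub_eneg {q : ℕ} {ξ : ℤ} (hξ : ¬ (q : ℤ) ∣ ξ) :
    4 / (q : ℝ) ≤ ‖1 - eneg (ξ / q)‖ := by
  rw [norm_one_sub_eneg, show (4 : ℝ) / q = 2 * (2 / q) by ring]
  gcongr
  exact two_div_le_abs_sin_pi_mul_div hξ

lemma norm_one_sub_eneg_div_sub_one_le {x y D : ℝ} (hD : 0 < D) (hy : D ≤ ‖1 - eneg y‖) :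
    ‖(1 - eneg x) / (1 - eneg y) - 1‖ ≤ 2 * π * |x - y| / D := by
  have hne : 1 - eneg y ≠ 0 := norm_pos_iff.mp (hD.trans_le hy)
  have hH : (1 - eneg x) / (1 - eneg y) - 1 = eneg y * (1 - eneg (x - y)) / (1 - eneg y) := by
    rw [div_sub_one hne, ← eneg_sub_mul_eneg x y]
    ring
  rw [hH, norm_div, norm_mul, norm_eneg, one_mul]
  exact div_le_div₀ (by positivity) (norm_one_sub_eneg_le _) hD hy

lemma abs_mul_sub_le_of_succ_eq_div {N P Q : ℕ} (hP : 0 < P) (hN : N + 1 = Q / P) :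
    |(N : ℝ) * P - Q| ≤ 2 * P := by
  have hlow : (N + 1) * P ≤ Q := hN ▸ Nat.div_mul_le_self Q P
  have hup : Q < (N + 2) * P := (Nat.div_lt_iff_lt_mul hP).mp (by omega)
  rw [abs_le]
  constructor
  · have : (Q : ℝ) < (N + 2) * P := by exact_mod_cast hup
    linarith
  · have : ((N : ℝ) + 1) * P ≤ Q := by exact_mod_cast hlow
    linarith [(Nat.cast_nonneg P : (0 : ℝ) ≤ P)]

lemma abs_mul_div_sub_div_le_of_succ_eq_div {N P Q : ℕ} (hP : 0 < P) (hN : N + 1 = Q / P)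
    (ξ : ℝ) : |ξ * N / Q - ξ / P| ≤ 2 * |ξ| / Q := by
  have hQ : 0 < Q := Nat.pos_of_ne_zero (by rintro rfl; simp at hN)
  have hPr : (0 : ℝ) < P := by exact_mod_cast hP
  have hQr : (0 : ℝ) < Q := by exact_mod_cast hQ
  rw [show ξ * N / Q - ξ / P = ξ * (N * P - Q) / (P * Q) by field_simp, abs_div, abs_mul,
    abs_of_pos (mul_pos hPr hQr), div_le_div_iff₀ (mul_pos hPr hQr) hQr]
  calc |ξ| * |(N : ℝ) * P - Q| * Q ≤ |ξ| * (2 * P) * Q := by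
        gcongr; exact abs_mul_sub_le_of_succ_eq_div hP hN
    _ = 2 * |ξ| * (P * Q) := by ring

/-- Lemma 6.9 (Pramanik–Zhang): there is an absolute constant `C₀ > 0` such that,
with `16 s₁^{b₁} < s₂^{a₂}` and `N₂ + 1 = ⌊s₂^{a₂}/s₁^{b₁}⌋`, the function
`ℌ(ξ) = (1 − e(ξ N₂ s₂^{−a₂}))/(1 − e(ξ s₁^{−b₁}))` satisfies
`|ℌ(ξ) − 1| ≤ C₀ |ξ| s₁^{b₁} s₂^{−a₂}` whenever `s₁^{b₁} ∤ ξ` and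
`ξ² ≤ s₁^{b₁} s₂^{a₂}`. -/
theorem Hfun_estimate :
    ∃ C₀ : ℝ, 0 < C₀ ∧
      ∀ s₁ s₂ a₁ b₁ a₂ b₂ N₂ : ℕ, 3 ≤ s₁ → 3 ≤ s₂ →
        1 ≤ a₁ → a₁ < b₁ → 1 ≤ a₂ → a₂ < b₂ →
        16 * s₁ ^ b₁ < s₂ ^ a₂ → N₂ + 1 = s₂ ^ a₂ / s₁ ^ b₁ →
        ∀ ξ : ℤ, ¬ ((s₁ : ℤ) ^ b₁ ∣ ξ) →
          (ξ : ℝ) ^ 2 ≤ (s₁ : ℝ) ^ b₁ * (s₂ : ℝ) ^ a₂ →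
          ‖(1 - eneg ((ξ : ℝ) * N₂ / (s₂ : ℝ) ^ a₂)) /
              (1 - eneg ((ξ : ℝ) / (s₁ : ℝ) ^ b₁)) - 1‖ ≤
            C₀ * |(ξ : ℝ)| * (s₁ : ℝ) ^ b₁ / (s₂ : ℝ) ^ a₂ := by
  refine ⟨π, pi_pos, ?_⟩
  intro s₁ s₂ a₁ b₁ a₂ b₂ N₂ hs₁ _ _ _ _ _ _ hN ξ hξ _
  have hP : 0 < s₁ ^ b₁ := pow_pos (by omega) _
  have hden := four_div_le_norm_one_sub_eneg (q := s₁ ^ b₁) (ξ := ξ) (by exact_mod_cast hξ)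
  have hphase := abs_mul_div_sub_div_le_of_succ_eq_div hP hN ξ
  push_cast at hden hphase
  calc _ ≤ 2 * π * |(ξ : ℝ) * N₂ / (s₂ : ℝ) ^ a₂ - ξ / (s₁ : ℝ) ^ b₁| / (4 / (s₁ : ℝ) ^ b₁) :=
        norm_one_sub_eneg_div_sub_one_le (by positivity) hden
    _ ≤ 2 * π * (2 * |(ξ : ℝ)| / (s₂ : ℝ) ^ a₂) / (4 / (s₁ : ℝ) ^ b₁) := by gcongr
    _ = π * |(ξ : ℝ)| * (s₁ : ℝ) ^ b₁ / (s₂ : ℝ) ^ a₂ := by field_simp; ring
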